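/- Let a < b, let φ : [a,b] → [a,b] be an affine continuous map with φ(a) < φ(b), let g : [a,b] → [0,∞) be a φ-P-function (φ_h-convex with h(t) = 1) that is Lebesgue integrable, and let f : [a,b] → [0,∞) be Lebesgue integrable and (g,φ_h)-convex dominated on [a,b] with h(t) = 1. Then |f(φ(a)) + f(φ(b)) − (1/(φ(b) − φ(a))) ∫_{φ(a)}^{φ(b)} f(x) dx| ≤ g(φ(a)) + g(φ(b)) − (1/(φ(b) − φ(a))) ∫_{φ(a)}^{φ(b)} g(x) dx. -/

import Mathlib

open MeasureTheory Set

/-- `F` is `φ_h`-convex on `I`. -/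
def PhiHConvexOn (I : Set ℝ) (h φ F : ℝ → ℝ) : Prop :=
  ∀ x ∈ I, ∀ y ∈ I, ∀ t ∈ Set.Ioo (0:ℝ) 1,
    F (t * φ x + (1 - t) * φ y) ≤ h t * F (φ x) + h (1 - t) * F (φ y)

/-- `f` is `(g, φ_h)`-convex dominated on `I`. -/
def GPhiHConvexDominated (I : Set ℝ) (h φ g f : ℝ → ℝ) : Prop :=
  ∀ x ∈ I, ∀ y ∈ I, ∀ t ∈ Set.Ioo (0:ℝ) 1,
    |h t * f (φ x) + h (1 - t) * f (φ y) - f (t * φ x + (1 - t) * φ y)| ≤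
      h t * g (φ x) + h (1 - t) * g (φ y) - g (t * φ x + (1 - t) * φ y)

/-! Along the segment from `φ a` to `φ b` the domination hypothesis is a pointwise inequality
`|c - f| ≤ d - g` in the parameter `t ∈ (0, 1)`, with `c = f (φ a) + f (φ b)` and `d = g (φ a) + g (φ b)`.
Integrating it over `t` and substituting `x = t φ(a) + (1 - t) φ(b)` turns both sides into averages over
`[φ a, φ b]`. -/

namespace IntervalIntegrable

theorem comp_segment {F : ℝ → ℝ} {α β : ℝ} (hαβ : α ≠ β) (hF : IntervalIntegrable F volume α β) :
    IntervalIntegrable (fun t => F (t * α + (1 - t) * β)) volume 0 1 := by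
  have hc : α - β ≠ 0 := sub_ne_zero.2 hαβ
  have h := (hF.comp_add_right β).comp_mul_left (c := α - β)
  simp only [sub_self, zero_div, div_self hc] at h
  convert h.symm using 2 with t
  ring_nf

end IntervalIntegrable

namespace intervalIntegral

theorem integral_comp_segment (F : ℝ → ℝ) {α β : ℝ} (hαβ : α ≠ β) :
    ∫ t in (0 : ℝ)..1, F (t * α + (1 - t) * β) = (β - α)⁻¹ * ∫ x in α..β, F x := by
  have hc : α - β ≠ 0 := sub_ne_zero.2 hαβ
  have h := integral_comp_mul_add F hc β (a := 0) (b := 1)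
  simp only [mul_zero, zero_add, mul_one, sub_add_cancel, smul_eq_mul] at h
  rw [show (fun t => F (t * α + (1 - t) * β)) = fun t => F ((α - β) * t + β) by
    ext t; ring_nf, h, integral_symm, ← neg_sub β α, inv_neg, neg_mul_neg]

theorem abs_integral_le_integral_of_abs_le_Ioo {u v : ℝ → ℝ} {a b : ℝ} (hab : a ≤ b)
    (hv : IntervalIntegrable v volume a b) (h : ∀ t ∈ Set.Ioo a b, |u t| ≤ v t) :
    |∫ t in a..b, u t| ≤ ∫ t in a..b, v t := by
  refine norm_integral_le_of_norm_le (f := u) hab ?_ hv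
  filter_upwards [Measure.ae_ne volume b] with t htb ht
  exact h t ⟨ht.1, lt_of_le_of_ne ht.2 htb⟩

end intervalIntegral

open intervalIntegral in
theorem abs_sub_average_le_of_abs_sub_le_on_segment {f g : ℝ → ℝ} {α β c d : ℝ} (hαβ : α ≠ β)
    (hf : IntervalIntegrable f volume α β) (hg : IntervalIntegrable g volume α β)
    (hdom : ∀ t ∈ Set.Ioo (0 : ℝ) 1,
      |c - f (t * α + (1 - t) * β)| ≤ d - g (t * α + (1 - t) * β)) :
    |c - (β - α)⁻¹ * ∫ x in α..β, f x| ≤ d - (β - α)⁻¹ * ∫ x in α..β, g x := by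
  have average_eq : ∀ (e : ℝ) (F : ℝ → ℝ), IntervalIntegrable F volume α β →
      ∫ t in (0 : ℝ)..1, (e - F (t * α + (1 - t) * β)) = e - (β - α)⁻¹ * ∫ x in α..β, F x := by
    intro e F hF
    rw [integral_sub intervalIntegrable_const (hF.comp_segment hαβ), integral_comp_segment F hαβ]
    simp
  rw [← average_eq c f hf, ← average_eq d g hg]
  exact abs_integral_le_integral_of_abs_le_Ioo zero_le_one
    (intervalIntegrable_const.sub (hg.comp_segment hαβ)) hdom

theorem stmt10_general (a b : ℝ) (hab : a < b) (φ f g : ℝ → ℝ)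
    (hφmaps : Set.MapsTo φ (Set.Icc a b) (Set.Icc a b))
    (hφab : φ a < φ b)
    (hgint : IntegrableOn g (Set.Icc a b))
    (hfint : IntegrableOn f (Set.Icc a b))
    (hfdom : GPhiHConvexDominated (Set.Icc a b) (fun _ => 1) φ g f) :
    |(f (φ a) + f (φ b)) - (1 / (φ b - φ a)) * ∫ x in φ a..φ b, f x| ≤
      (g (φ a) + g (φ b)) - (1 / (φ b - φ a)) * ∫ x in φ a..φ b, g x := by
  have ha : a ∈ Set.Icc a b := left_mem_Icc.2 hab.le
  have hb : b ∈ Set.Icc a b := right_mem_Icc.2 hab.le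
  have hsub : Set.uIcc (φ a) (φ b) ⊆ Set.Icc a b := uIcc_subset_Icc (hφmaps ha) (hφmaps hb)
  rw [one_div]
  refine abs_sub_average_le_of_abs_sub_le_on_segment hφab.ne
    (hfint.mono_set hsub).intervalIntegrable (hgint.mono_set hsub).intervalIntegrable
    fun t ht => ?_
  simpa only [one_mul] using hfdom a ha b hb t ht

theorem stmt10 (a b : ℝ) (hab : a < b) (φ f g : ℝ → ℝ)
    (hφmaps : Set.MapsTo φ (Set.Icc a b) (Set.Icc a b))
    (hφaff : ∀ x ∈ Set.Icc a b, ∀ y ∈ Set.Icc a b, ∀ l ∈ Set.Icc (0:ℝ) 1,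
      φ (l * x + (1 - l) * y) = l * φ x + (1 - l) * φ y)
    (hφcont : ContinuousOn φ (Set.Icc a b))
    (hφab : φ a < φ b)
    (hg0 : ∀ x ∈ Set.Icc a b, 0 ≤ g x)
    (hgconv : PhiHConvexOn (Set.Icc a b) (fun _ => 1) φ g)
    (hgint : IntegrableOn g (Set.Icc a b))
    (hf0 : ∀ x ∈ Set.Icc a b, 0 ≤ f x)
    (hfint : IntegrableOn f (Set.Icc a b))
    (hfdom : GPhiHConvexDominated (Set.Icc a b) (fun _ => 1) φ g f) :
    |(f (φ a) + f (φ b)) - (1 / (φ b - φ a)) * ∫ x in φ a..φ b, f x| ≤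
      (g (φ a) + g (φ b)) - (1 / (φ b - φ a)) * ∫ x in φ a..φ b, g x :=
  stmt10_general a b hab φ f g hφmaps hφab hgint hfint hfdom
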